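/- arXiv:1911.04929 — 4 statements merged into one kernel-verified Lean document; each statement's English description precedes it below -/
import Mathlib

section
/- Let P and Q be probability measures on a measurable space (Ω, 𝓕) with P absolutely continuous with respect to Q and with Radon–Nikodym derivative dP/dQ square-integrable with respect to Q. Then the χ² divergence admits the dual (variational) representation χ²(P,Q) = sup_f ( ∫ f dP − ∫ (f + f²/4) dQ ), where the supremum is taken over all measurable functions f : Ω → ℝ for which ∫ f dP and ∫ (f + f²/4) dQ are finite. -/
open MeasureTheory

/-!
Write `r = dP/dQ`, so that `∫ f dP = ∫ r f dQ`. The function `φ(t) = (t - 1)²` has convex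
conjugate `φ*(y) = y + y²/4`, and Fenchel–Young gives `r f - (f + f²/4) ≤ (r - 1)²` pointwise,
with equality at `f = 2 (r - 1)`. Integrating against `Q` bounds every
`∫ f dP - ∫ (f + f²/4) dQ` by `∫ (r - 1)² dQ = ∫ r² dQ - 1`, and `f = 2 (r - 1)` attains
the bound.
-/

lemma mul_sub_add_sq_div_four_le_sub_one_sq (r f : ℝ) :
    r * f - (f + f ^ 2 / 4) ≤ (r - 1) ^ 2 := by
  nlinarith [sq_nonneg (f / 2 - (r - 1))]

lemma mul_sub_add_sq_div_four_eq_sub_one_sq (r : ℝ) :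
    r * (2 * (r - 1)) - (2 * (r - 1) + (2 * (r - 1)) ^ 2 / 4) = (r - 1) ^ 2 := by
  ring

section RNDeriv

variable {Ω : Type*} [MeasurableSpace Ω] {P Q : Measure Ω}

section LebesgueDecomposition

variable [P.HaveLebesgueDecomposition Q] [SigmaFinite P]

lemma integral_sub_integral_eq_integral_toReal_rnDeriv_mul_sub (hPQ : P ≪ Q) {f g : Ω → ℝ}
    (hf : Integrable f P) (hg : Integrable g Q) :
    ∫ ω, f ω ∂P - ∫ ω, g ω ∂Q = ∫ ω, ((P.rnDeriv Q ω).toReal * f ω - g ω) ∂Q := by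
  rw [← integral_toReal_rnDeriv_mul hPQ,
    integral_sub ((integrable_toReal_rnDeriv_mul_iff hPQ).2 hf) hg]

lemma integral_sub_integral_add_sq_div_four_le (hPQ : P ≪ Q)
    (h_sq : Integrable (fun ω => ((P.rnDeriv Q ω).toReal - 1) ^ 2) Q) {f : Ω → ℝ}
    (hfP : Integrable f P) (hfQ : Integrable (fun ω => f ω + f ω ^ 2 / 4) Q) :
    ∫ ω, f ω ∂P - ∫ ω, (f ω + f ω ^ 2 / 4) ∂Q ≤
      ∫ ω, ((P.rnDeriv Q ω).toReal - 1) ^ 2 ∂Q := by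
  rw [integral_sub_integral_eq_integral_toReal_rnDeriv_mul_sub hPQ hfP hfQ]
  exact integral_mono ((integrable_toReal_rnDeriv_mul_iff hPQ).2 hfP |>.sub hfQ) h_sq
    fun ω => mul_sub_add_sq_div_four_le_sub_one_sq _ (f ω)

end LebesgueDecomposition

lemma memLp_two_toReal_rnDeriv_iff_integrable_sq :
    MemLp (fun ω => (P.rnDeriv Q ω).toReal) 2 Q ↔
      Integrable (fun ω => (P.rnDeriv Q ω).toReal ^ 2) Q :=
  memLp_two_iff_integrable_sq
    (Measure.measurable_rnDeriv P Q).ennreal_toReal.aestronglyMeasurable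

lemma integral_toReal_rnDeriv_sub_one_sq [IsProbabilityMeasure P] [IsProbabilityMeasure Q]
    (hPQ : P ≪ Q) (hr2 : Integrable (fun ω => (P.rnDeriv Q ω).toReal ^ 2) Q) :
    ∫ ω, ((P.rnDeriv Q ω).toReal - 1) ^ 2 ∂Q =
      ∫ ω, (P.rnDeriv Q ω).toReal ^ 2 ∂Q - 1 := by
  set r : Ω → ℝ := fun ω => (P.rnDeriv Q ω).toReal
  have h_lin : Integrable (fun ω => r ω ^ 2 - 2 * r ω) Q :=
    hr2.sub (Measure.integrable_toReal_rnDeriv.const_mul 2)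
  have h_expand : (fun ω => (r ω - 1) ^ 2) = fun ω => r ω ^ 2 - 2 * r ω + 1 := by
    funext ω; ring
  rw [h_expand, integral_add h_lin (integrable_const 1),
    integral_sub hr2 (Measure.integrable_toReal_rnDeriv.const_mul 2), integral_const_mul,
    Measure.integral_toReal_rnDeriv hPQ]
  simp only [probReal_univ, integral_const, smul_eq_mul, mul_one]
  ring

end RNDeriv

/-- For probability measures `P ≪ Q` with square-integrable Radon–Nikodym
derivative, the χ² divergence `χ²(P,Q) = ∫ (dP/dQ)² dQ − 1` admits the dual representation
`χ²(P,Q) = sup_f ( ∫ f dP − ∫ (f + f²/4) dQ )`, the supremum over all measurable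
`f : Ω → ℝ` with finite (i.e. integrable) `∫ f dP` and `∫ (f + f²/4) dQ`. -/
theorem chiSq_dual_representation {Ω : Type*} [MeasurableSpace Ω]
    (P Q : Measure Ω) [IsProbabilityMeasure P] [IsProbabilityMeasure Q]
    (hPQ : P ≪ Q)
    (hr2 : Integrable (fun ω => ((P.rnDeriv Q ω).toReal) ^ 2) Q) :
    ∫ ω, ((P.rnDeriv Q ω).toReal) ^ 2 ∂Q - 1 =
      sSup { c : ℝ | ∃ f : Ω → ℝ, Measurable f ∧ Integrable f P ∧
        Integrable (fun ω => f ω + (f ω) ^ 2 / 4) Q ∧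
        c = ∫ ω, f ω ∂P - ∫ ω, (f ω + (f ω) ^ 2 / 4) ∂Q } := by
  set r : Ω → ℝ := fun ω => (P.rnDeriv Q ω).toReal
  have hr : MemLp r 2 Q := memLp_two_toReal_rnDeriv_iff_integrable_sq.2 hr2
  have h_opt : MemLp (fun ω => 2 * (r ω - 1)) 2 Q := (hr.sub (memLp_const 1)).const_mul 2
  have h_opt_P : Integrable (fun ω => 2 * (r ω - 1)) P :=
    (integrable_toReal_rnDeriv_mul_iff hPQ).1 (hr.integrable_mul h_opt)
  have h_opt_Q : Integrable (fun ω => 2 * (r ω - 1) + (2 * (r ω - 1)) ^ 2 / 4) Q :=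
    (h_opt.integrable one_le_two).add (h_opt.integrable_sq.div_const 4)
  rw [← integral_toReal_rnDeriv_sub_one_sq hPQ hr2]
  refine (IsGreatest.csSup_eq ⟨?_, ?_⟩).symm
  · refine ⟨fun ω => 2 * (r ω - 1), ?_, h_opt_P, h_opt_Q, ?_⟩
    · exact (Measure.measurable_rnDeriv P Q).ennreal_toReal.sub_const 1 |>.const_mul 2
    · rw [integral_sub_integral_eq_integral_toReal_rnDeriv_mul_sub hPQ h_opt_P h_opt_Q]
      exact integral_congr_ae <| .of_forall fun ω =>
        (mul_sub_add_sq_div_four_eq_sub_one_sq (r ω)).symm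
  · rintro c ⟨f, -, hfP, hfQ, rfl⟩
    exact integral_sub_integral_add_sq_div_four_le hPQ
      (hr.sub (memLp_const 1)).integrable_sq hfP hfQ
end

section
/- Let P and Q be probability measures on a measurable space (Ω, 𝓕) with P absolutely continuous with respect to Q and with Radon–Nikodym derivative dP/dQ square-integrable with respect to Q. Then for every measurable function f : Ω → ℝ such that ∫ f dP and ∫ (f + f²/4) dQ are finite, one has ∫ f dP − ∫ (f + f²/4) dQ ≤ χ²(P,Q). -/
open MeasureTheory

/-- For probability measures `P ≪ Q` with square-integrable Radon–Nikodym
derivative, every measurable `f` with finite `∫ f dP` and `∫ (f + f²/4) dQ` satisfies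
`∫ f dP − ∫ (f + f²/4) dQ ≤ χ²(P,Q)`, where `χ²(P,Q) = ∫ (dP/dQ)² dQ − 1`. -/
theorem chiSq_dual_le {Ω : Type*} [MeasurableSpace Ω]
    (P Q : Measure Ω) [IsProbabilityMeasure P] [IsProbabilityMeasure Q]
    (hPQ : P ≪ Q)
    (hr2 : Integrable (fun ω => ((P.rnDeriv Q ω).toReal) ^ 2) Q)
    (f : Ω → ℝ) (hf : Measurable f)
    (hfP : Integrable f P)
    (hfQ : Integrable (fun ω => f ω + (f ω) ^ 2 / 4) Q) :
    ∫ ω, f ω ∂P - ∫ ω, (f ω + (f ω) ^ 2 / 4) ∂Q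
      ≤ ∫ ω, ((P.rnDeriv Q ω).toReal) ^ 2 ∂Q - 1 := by
  set r : Ω → ℝ := fun ω => ((P.rnDeriv Q ω).toReal) with hr_def
  have hr1 : Integrable r Q := Measure.integrable_toReal_rnDeriv
  have hintP : ∫ ω, f ω ∂P = ∫ ω, r ω * f ω ∂Q := by
    rw [← integral_rnDeriv_smul hPQ]
    rfl
  have hfr : Integrable (fun ω => r ω * f ω) Q :=
    (integrable_rnDeriv_smul_iff hPQ).mpr hfP
  have hrint1 : ∫ ω, r ω ∂Q = 1 := by
    rw [hr_def, Measure.integral_toReal_rnDeriv hPQ]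
    simp
  have hi1 : Integrable (fun ω => r ω ^ 2 - 2 * r ω) Q := hr2.sub (hr1.const_mul 2)
  have hsq : Integrable (fun ω => (r ω - 1) ^ 2) Q := by
    have h : Integrable (fun ω => r ω ^ 2 - 2 * r ω + 1) Q := hi1.add (integrable_const 1)
    exact h.congr (Filter.Eventually.of_forall fun ω => by ring)
  have key : ∫ ω, (r ω * f ω - (f ω + (f ω) ^ 2 / 4)) ∂Q
      ≤ ∫ ω, (r ω - 1) ^ 2 ∂Q := by
    refine integral_mono (hfr.sub hfQ) hsq fun ω => ?_
    simp only
    nlinarith [sq_nonneg (r ω - 1 - f ω / 2)]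
  have hsq_eq : ∫ ω, (r ω - 1) ^ 2 ∂Q = ∫ ω, (r ω) ^ 2 ∂Q - 1 := by
    have : ∀ ω, (r ω - 1) ^ 2 = (r ω) ^ 2 - 2 * r ω + 1 := fun ω => by ring
    rw [integral_congr_ae (Filter.Eventually.of_forall this),
      integral_add hi1 (integrable_const 1),
      integral_sub hr2 (hr1.const_mul 2), integral_const_mul, hrint1]
    simp only [hr_def, integral_const, measure_univ, ENNReal.toReal_one, probReal_univ, smul_eq_mul,
      mul_one, one_smul]
    ring
  rw [hintP, ← integral_sub hfr hfQ]
  calc ∫ ω, (r ω * f ω - (f ω + (f ω) ^ 2 / 4)) ∂Q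
      ≤ ∫ ω, (r ω - 1) ^ 2 ∂Q := key
    _ = ∫ ω, (r ω) ^ 2 ∂Q - 1 := hsq_eq
end

section
/- Let U and V be real-valued random variables on a probability space (Ω, 𝓕, P), let μ denote the joint law of (U,V) on ℝ × ℝ and μ₁, μ₂ the laws of U and V respectively, and assume μ is absolutely continuous with respect to the product measure μ₁ ⊗ μ₂ with square-integrable Radon–Nikodym derivative. Then for all measurable functions f, g : ℝ → ℝ with E[f(U)] = E[g(V)] = 0 and E[f(U)²] = E[g(V)²] = 1, one has (E[f(U) g(V)])² ≤ χ²(μ, μ₁ ⊗ μ₂). In particular HGR(U,V)² ≤ χ²(P_{U,V}, P_U ⊗ P_V). -/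
/-!
Write `r = dμ/d(μ₁ ⊗ μ₂)` for the density of the joint law against the product of the marginals.
For standardized `f(U)`, `g(V)`,
`E[f(U) g(V)] = ∫ (f ⊗ g) r d(μ₁ ⊗ μ₂) = ∫ (f ⊗ g) (r - 1) d(μ₁ ⊗ μ₂)`,
because `f ⊗ g` is centred under the product measure. Cauchy–Schwarz in `L²(μ₁ ⊗ μ₂)`, with
`‖f ⊗ g‖₂ = 1` and `‖r - 1‖₂² = ∫ r² - 1 = χ²`, gives the bound; taking the supremum gives
the bound on the maximal correlation.
-/

open MeasureTheory

/-- The Hirschfeld–Gebelein–Rényi maximal correlation of two real random variables: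
`HGR(U,V) = sup E[f(U) g(V)]`, the supremum over measurable `f, g : ℝ → ℝ` with
`E[f(U)] = E[g(V)] = 0` and `E[f(U)²] = E[g(V)²] = 1`. -/
noncomputable def hgr {Ω : Type*} [MeasurableSpace Ω] (P : Measure Ω) (U V : Ω → ℝ) : ℝ :=
  sSup { c : ℝ | ∃ f g : ℝ → ℝ, Measurable f ∧ Measurable g ∧
    (∫ ω, f (U ω) ∂P) = 0 ∧ (∫ ω, g (V ω) ∂P) = 0 ∧
    (∫ ω, (f (U ω)) ^ 2 ∂P) = 1 ∧ (∫ ω, (g (V ω)) ^ 2 ∂P) = 1 ∧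
    c = ∫ ω, f (U ω) * g (V ω) ∂P }

namespace MeasureTheory

section L2

variable {α : Type*} [MeasurableSpace α] {μ : Measure α} {f g : α → ℝ}

lemma integral_mul_eq_inner_toLp (hf : MemLp f 2 μ) (hg : MemLp g 2 μ) :
    ∫ x, f x * g x ∂μ = inner ℝ (hf.toLp f) (hg.toLp g) := by
  rw [L2.inner_def]
  refine integral_congr_ae ?_
  filter_upwards [hf.coeFn_toLp, hg.coeFn_toLp] with x hfx hgx
  simp [hfx, hgx, mul_comm]

lemma sq_integral_mul_le (hf : MemLp f 2 μ) (hg : MemLp g 2 μ) :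
    (∫ x, f x * g x ∂μ) ^ 2 ≤ (∫ x, f x ^ 2 ∂μ) * ∫ x, g x ^ 2 ∂μ := by
  have h := real_inner_mul_inner_self_le (hf.toLp f) (hg.toLp g)
  simp only [← integral_mul_eq_inner_toLp, ← sq] at h
  exact h

lemma memLp_two_of_integral_sq_ne_zero (hf : AEStronglyMeasurable f μ)
    (h : ∫ x, f x ^ 2 ∂μ ≠ 0) : MemLp f 2 μ :=
  (memLp_two_iff_integrable_sq hf).2 <| by
    by_contra hint
    exact h (integral_undef hint)

end L2

section ChiSq

variable {α : Type*} [MeasurableSpace α] {μ ν : Measure α}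

noncomputable def chiSq (μ ν : Measure α) : ℝ := ∫ x, (μ.rnDeriv ν x).toReal ^ 2 ∂ν - 1

variable [IsProbabilityMeasure μ] [IsProbabilityMeasure ν]

lemma chiSq_eq_integral_rnDeriv_sub_one_sq (hμν : μ ≪ ν)
    (hr : Integrable (fun x => (μ.rnDeriv ν x).toReal ^ 2) ν) :
    chiSq μ ν = ∫ x, ((μ.rnDeriv ν x).toReal - 1) ^ 2 ∂ν := by
  have hr_int : Integrable (fun x => (μ.rnDeriv ν x).toReal) ν :=
    Measure.integrable_toReal_rnDeriv
  have h_expand : (fun x => ((μ.rnDeriv ν x).toReal - 1) ^ 2)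
      = fun x => ((μ.rnDeriv ν x).toReal ^ 2 - 2 * (μ.rnDeriv ν x).toReal) + 1 := by
    funext x; ring
  rw [chiSq, h_expand,
    integral_add (f := fun x => (μ.rnDeriv ν x).toReal ^ 2 - 2 * (μ.rnDeriv ν x).toReal)
      (hr.sub (hr_int.const_mul 2)) (integrable_const 1),
    integral_sub hr (hr_int.const_mul 2), integral_const_mul,
    Measure.integral_toReal_rnDeriv hμν]
  simp only [probReal_univ, integral_const, smul_eq_mul]
  ring

lemma chiSq_nonneg (hμν : μ ≪ ν) (hr : Integrable (fun x => (μ.rnDeriv ν x).toReal ^ 2) ν) :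
    0 ≤ chiSq μ ν :=
  chiSq_eq_integral_rnDeriv_sub_one_sq hμν hr ▸ integral_nonneg fun _ => sq_nonneg _

lemma sq_integral_le_integral_sq_mul_chiSq (hμν : μ ≪ ν)
    (hr : Integrable (fun x => (μ.rnDeriv ν x).toReal ^ 2) ν) {φ : α → ℝ} (hφ : MemLp φ 2 ν)
    (hφ0 : ∫ x, φ x ∂ν = 0) :
    (∫ x, φ x ∂μ) ^ 2 ≤ (∫ x, φ x ^ 2 ∂ν) * chiSq μ ν := by
  have hr2 : MemLp (fun x => (μ.rnDeriv ν x).toReal) 2 ν :=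
    (memLp_two_iff_integrable_sq
      (Measure.measurable_rnDeriv μ ν).ennreal_toReal.aestronglyMeasurable).2 hr
  have h_centre : ∫ x, φ x ∂μ = ∫ x, φ x * ((μ.rnDeriv ν x).toReal - 1) ∂ν := by
    simp only [mul_sub, mul_one]
    rw [integral_sub (f := fun x => φ x * (μ.rnDeriv ν x).toReal) (hφ.integrable_mul hr2)
      (hφ.integrable one_le_two), hφ0, sub_zero,
      ← integral_toReal_rnDeriv_mul hμν]
    simp only [mul_comm]
  rw [h_centre, chiSq_eq_integral_rnDeriv_sub_one_sq hμν hr]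
  exact sq_integral_mul_le hφ (hr2.sub (memLp_const 1))

end ChiSq

section Product

variable {α β : Type*} [MeasurableSpace α] [MeasurableSpace β]
  {μ₁ : Measure α} {μ₂ : Measure β} {f : α → ℝ} {g : β → ℝ}

lemma MemLp.mul_prod [SFinite μ₂] (hf : MemLp f 2 μ₁) (hg : MemLp g 2 μ₂) :
    MemLp (fun p : α × β => f p.1 * g p.2) 2 (μ₁.prod μ₂) := by
  refine (memLp_two_iff_integrable_sq (f := fun p : α × β => f p.1 * g p.2)
    (hf.1.comp_fst.mul hg.1.comp_snd)).2 ?_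
  simpa only [mul_pow] using hf.integrable_sq.mul_prod hg.integrable_sq

lemma sq_integral_mul_le_chiSq_prod [IsProbabilityMeasure μ₁] [IsProbabilityMeasure μ₂]
    {μ : Measure (α × β)} [IsProbabilityMeasure μ] (hμ : μ ≪ μ₁.prod μ₂)
    (hr : Integrable (fun p => (μ.rnDeriv (μ₁.prod μ₂) p).toReal ^ 2) (μ₁.prod μ₂))
    (hf : MemLp f 2 μ₁) (hg : MemLp g 2 μ₂) (hf0 : ∫ x, f x ∂μ₁ = 0) :
    (∫ p, f p.1 * g p.2 ∂μ) ^ 2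
      ≤ (∫ x, f x ^ 2 ∂μ₁) * (∫ y, g y ^ 2 ∂μ₂) * chiSq μ (μ₁.prod μ₂) := by
  have h := sq_integral_le_integral_sq_mul_chiSq hμ hr (hf.mul_prod hg)
    (by rw [integral_prod_mul, hf0, zero_mul])
  simpa only [mul_pow, integral_prod_mul (fun x => f x ^ 2) (fun y => g y ^ 2)] using h

end Product

end MeasureTheory

lemma Real.sq_sSup_le {S : Set ℝ} {a : ℝ} (ha : 0 ≤ a) (hS : ∀ c ∈ S, c ^ 2 ≤ a) :
    sSup S ^ 2 ≤ a := by
  have hS' : ∀ c ∈ S, -√a ≤ c ∧ c ≤ √a := fun c hc => (Real.sq_le ha).1 (hS c hc)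
  refine (Real.sq_le ha).2 ⟨?_, Real.sSup_le (fun c hc => (hS' c hc).2) (Real.sqrt_nonneg a)⟩
  rcases S.eq_empty_or_nonempty with rfl | ⟨c, hc⟩
  · simp [Real.sqrt_nonneg]
  · exact (hS' c hc).1.trans (le_csSup ⟨√a, fun c hc => (hS' c hc).2⟩ hc)

/-- Let `μ` be the joint law of `(U,V)` and `μ₁, μ₂` the marginal laws,
with `μ ≪ μ₁ ⊗ μ₂` and square-integrable Radon–Nikodym derivative. Then for all
measurable `f, g : ℝ → ℝ` with `E[f(U)] = E[g(V)] = 0` and `E[f(U)²] = E[g(V)²] = 1`,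
`(E[f(U) g(V)])² ≤ χ²(μ, μ₁ ⊗ μ₂)`; in particular `HGR(U,V)² ≤ χ²(P_{U,V}, P_U ⊗ P_V)`,
where `χ²(P,Q) = ∫ (dP/dQ)² dQ − 1`. -/
theorem hgr_sq_le_chiSq {Ω : Type*} [MeasurableSpace Ω]
    (P : Measure Ω) [IsProbabilityMeasure P]
    (U V : Ω → ℝ) (hU : Measurable U) (hV : Measurable V)
    (hac : Measure.map (fun ω => (U ω, V ω)) P ≪
      (Measure.map U P).prod (Measure.map V P))
    (hr2 : Integrable
      (fun p => (((Measure.map (fun ω => (U ω, V ω)) P).rnDeriv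
        ((Measure.map U P).prod (Measure.map V P)) p).toReal) ^ 2)
      ((Measure.map U P).prod (Measure.map V P))) :
    (∀ f g : ℝ → ℝ, Measurable f → Measurable g →
      (∫ ω, f (U ω) ∂P) = 0 → (∫ ω, g (V ω) ∂P) = 0 →
      (∫ ω, (f (U ω)) ^ 2 ∂P) = 1 → (∫ ω, (g (V ω)) ^ 2 ∂P) = 1 →
      (∫ ω, f (U ω) * g (V ω) ∂P) ^ 2 ≤
        (∫ p, (((Measure.map (fun ω => (U ω, V ω)) P).rnDeriv
          ((Measure.map U P).prod (Measure.map V P)) p).toReal) ^ 2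
          ∂((Measure.map U P).prod (Measure.map V P))) - 1) ∧
    (hgr P U V) ^ 2 ≤
      (∫ p, (((Measure.map (fun ω => (U ω, V ω)) P).rnDeriv
        ((Measure.map U P).prod (Measure.map V P)) p).toReal) ^ 2
        ∂((Measure.map U P).prod (Measure.map V P))) - 1 := by
  have hUV : Measurable fun ω => (U ω, V ω) := hU.prodMk hV
  have := Measure.isProbabilityMeasure_map (μ := P) hUV.aemeasurable
  have := Measure.isProbabilityMeasure_map (μ := P) hU.aemeasurable
  have := Measure.isProbabilityMeasure_map (μ := P) hV.aemeasurable
  have key : ∀ f g : ℝ → ℝ, Measurable f → Measurable g →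
      (∫ ω, f (U ω) ∂P) = 0 → (∫ ω, g (V ω) ∂P) = 0 →
      (∫ ω, (f (U ω)) ^ 2 ∂P) = 1 → (∫ ω, (g (V ω)) ^ 2 ∂P) = 1 →
      (∫ ω, f (U ω) * g (V ω) ∂P) ^ 2 ≤
        chiSq (P.map fun ω => (U ω, V ω)) ((P.map U).prod (P.map V)) := by
    intro f g hf hg hf0 _ hf1 hg1
    rw [← integral_map hU.aemeasurable hf.aestronglyMeasurable] at hf0
    rw [← integral_map hU.aemeasurable (hf.pow_const 2).aestronglyMeasurable] at hf1
    rw [← integral_map hV.aemeasurable (hg.pow_const 2).aestronglyMeasurable] at hg1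
    have h := sq_integral_mul_le_chiSq_prod hac hr2
      (memLp_two_of_integral_sq_ne_zero hf.aestronglyMeasurable (by simp [hf1]))
      (memLp_two_of_integral_sq_ne_zero hg.aestronglyMeasurable (by simp [hg1])) hf0
    rwa [hf1, hg1, one_mul, one_mul, integral_map (f := fun p : ℝ × ℝ => f p.1 * g p.2)
      hUV.aemeasurable
      ((hf.comp measurable_fst).mul (hg.comp measurable_snd)).aestronglyMeasurable] at h
  refine ⟨key, Real.sq_sSup_le (chiSq_nonneg hac hr2) ?_⟩
  rintro c ⟨f, g, hf, hg, hf0, hg0, hf1, hg1, rfl⟩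
  exact key f g hf hg hf0 hg0 hf1 hg1
end

section
/- Let U and V be random variables on a probability space (Ω, 𝓕, P) taking values in finite types, with P(U = j) > 0 for every j and P(V = j') > 0 for every j', and let Q be the matrix with entries Q(j, j') = P(U = j, V = j') / (√(P(U = j)) · √(P(V = j'))). Then the operator norm of Q with respect to the Euclidean norms is at most 1; that is, for every vector x, ‖Q x‖₂ ≤ ‖x‖₂. Hence every singular value of Q is at most 1. -/
open MeasureTheory Matrix

/-!
Write `r j j' = P(U = j, V = j')`, `p j = P(U = j)`, `q j' = P(V = j')`. Each row of `Q x` is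
`p j ^ (-1/2) ∑ j', r j j' y j'` with `y j' = x j' / √(q j')`; weighted Cauchy–Schwarz with the
weights `r j ·`, whose total is `p j`, bounds its square by `∑ j', r j j' y j' ^ 2`. Summing over
`j` and using that the columns of `r` sum to `q` gives `∑ j', q j' y j' ^ 2 ≤ ‖x‖²`. The bound on
the eigenvalues of `Qᵀ Q` is the Rayleigh quotient at a unit eigenvector.
-/

theorem sq_sum_mul_div_le_sum_mul_sq {ι : Type*} (s : Finset ι) {w : ι → ℝ} {p : ℝ}
    (hw : ∀ i ∈ s, 0 ≤ w i) (hp : ∑ i ∈ s, w i ≤ p) (y : ι → ℝ) :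
    (∑ i ∈ s, w i * y i) ^ 2 / p ≤ ∑ i ∈ s, w i * y i ^ 2 := by
  have hwy : ∀ i ∈ s, 0 ≤ w i * y i ^ 2 := fun i hi => mul_nonneg (hw i hi) (sq_nonneg _)
  refine div_le_of_le_mul₀ ((Finset.sum_nonneg hw).trans hp) (Finset.sum_nonneg hwy) ?_
  calc (∑ i ∈ s, w i * y i) ^ 2 ≤ (∑ i ∈ s, w i) * ∑ i ∈ s, w i * y i ^ 2 :=
        Finset.sum_sq_le_sum_mul_sum_of_sq_le_mul s hw hwy fun i _ => (by ring : _ = _).le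
    _ ≤ (∑ i ∈ s, w i * y i ^ 2) * p := by
        rw [mul_comm]
        exact mul_le_mul_of_nonneg_left hp (Finset.sum_nonneg hwy)

theorem mul_div_sqrt_sq_le {q : ℝ} (hq : 0 ≤ q) (x : ℝ) : q * (x / √q) ^ 2 ≤ x ^ 2 := by
  rw [div_pow, Real.sq_sqrt hq, mul_div_left_comm]
  exact mul_le_of_le_one_right (sq_nonneg x) (div_self_le_one q)

theorem sum_mulVec_sq_le_sum_sq_of_sum_le {α β : Type*} [Fintype α] [Fintype β]
    {r Q : Matrix α β ℝ} {p : α → ℝ} {q : β → ℝ} (hr : ∀ i j, 0 ≤ r i j)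
    (hrow : ∀ i, ∑ j, r i j ≤ p i) (hcol : ∀ j, ∑ i, r i j ≤ q j)
    (hQ : ∀ i j, Q i j = r i j / (√(p i) * √(q j))) (x : β → ℝ) :
    ∑ i, (Q *ᵥ x) i ^ 2 ≤ ∑ j, x j ^ 2 := by
  set y : β → ℝ := fun j => x j / √(q j)
  have hQx : ∀ i, (Q *ᵥ x) i = (∑ j, r i j * y j) / √(p i) := fun i => by
    simp only [mulVec, dotProduct, hQ, y, Finset.sum_div]
    exact Finset.sum_congr rfl fun j _ => by ring
  calc ∑ i, (Q *ᵥ x) i ^ 2 ≤ ∑ i, ∑ j, r i j * y j ^ 2 := by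
        refine Finset.sum_le_sum fun i _ => ?_
        rw [hQx, div_pow, Real.sq_sqrt ((Finset.sum_nonneg fun j _ => hr i j).trans (hrow i))]
        exact sq_sum_mul_div_le_sum_mul_sq _ (fun j _ => hr i j) (hrow i) y
    _ = ∑ j, (∑ i, r i j) * y j ^ 2 := by rw [Finset.sum_comm]; simp only [Finset.sum_mul]
    _ ≤ ∑ j, q j * y j ^ 2 := by gcongr with j; exact hcol j
    _ ≤ ∑ j, x j ^ 2 := by
        gcongr with j
        exact mul_div_sqrt_sq_le ((Finset.sum_nonneg fun i _ => hr i j).trans (hcol j)) (x j)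

theorem Matrix.IsHermitian.eigenvalues_le_of_sum_mulVec_sq_le {α β : Type*} [Fintype α]
    [Fintype β] [DecidableEq β] {Q : Matrix α β ℝ} (hA : (Qᵀ * Q).IsHermitian) {c : ℝ}
    (hQ : ∀ x, ∑ i, (Q *ᵥ x) i ^ 2 ≤ c * ∑ j, x j ^ 2) (k : β) : hA.eigenvalues k ≤ c := by
  set v : β → ℝ := ⇑(hA.eigenvectorBasis k)
  have hv : ∑ j, v j ^ 2 = 1 := by
    have := hA.eigenvectorBasis.orthonormal.1 k
    rw [EuclideanSpace.norm_eq, Real.sqrt_eq_one] at this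
    simpa [v] using this
  calc hA.eigenvalues k = (Q *ᵥ v) ⬝ᵥ (Q *ᵥ v) := by
        rw [hA.eigenvalues_eq, ← mulVec_mulVec, dotProduct_mulVec, vecMul_transpose]
        simp [v]
    _ = ∑ i, (Q *ᵥ v) i ^ 2 := by simp only [dotProduct, sq]
    _ ≤ c := by simpa [hv] using hQ v

theorem sum_measure_preimage_singleton_inter {Ω β : Type*} [MeasurableSpace Ω] [Fintype β]
    [MeasurableSpace β] [MeasurableSingletonClass β] (μ : Measure Ω) {f : Ω → β}
    (hf : Measurable f) (s : Set Ω) : ∑ b, μ (f ⁻¹' {b} ∩ s) = μ s := by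
  simp_rw [← Measure.restrict_apply (hf (measurableSet_singleton _))]
  rw [sum_measure_preimage_singleton _ fun b _ => hf (measurableSet_singleton b)]
  simp

theorem sum_toReal_measure_preimage_singleton_inter {Ω β : Type*} [MeasurableSpace Ω] [Fintype β]
    [MeasurableSpace β] [MeasurableSingletonClass β] (μ : Measure Ω) [IsFiniteMeasure μ]
    {f : Ω → β} (hf : Measurable f) (s : Set Ω) :
    ∑ b, (μ (f ⁻¹' {b} ∩ s)).toReal = (μ s).toReal := by
  rw [← ENNReal.toReal_sum fun b _ => measure_ne_top μ _,
    sum_measure_preimage_singleton_inter μ hf s]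

theorem witsenhausen_operator_norm_le_one_general {Ω α β : Type*} [MeasurableSpace Ω]
    [Fintype α] [Fintype β] [DecidableEq β]
    [MeasurableSpace α] [MeasurableSingletonClass α]
    [MeasurableSpace β] [MeasurableSingletonClass β]
    (P : Measure Ω) [IsProbabilityMeasure P]
    (U : Ω → α) (V : Ω → β) (hU : Measurable U) (hV : Measurable V)
    (Q : Matrix α β ℝ)
    (hQdef : ∀ (j : α) (j' : β), Q j j' =
      (P (U ⁻¹' {j} ∩ V ⁻¹' {j'})).toReal /
        (Real.sqrt (P (U ⁻¹' {j})).toReal * Real.sqrt (P (V ⁻¹' {j'})).toReal))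
    (hherm : (Qᵀ * Q).IsHermitian) :
    (∀ x : β → ℝ, Real.sqrt (∑ j : α, (Q.mulVec x j) ^ 2) ≤
      Real.sqrt (∑ j' : β, (x j') ^ 2)) ∧
    ∀ i : β, Real.sqrt (hherm.eigenvalues i) ≤ 1 := by
  have hrow : ∀ j, ∑ j', (P (U ⁻¹' {j} ∩ V ⁻¹' {j'})).toReal ≤ (P (U ⁻¹' {j})).toReal :=
    fun j => by
      simp_rw [Set.inter_comm (U ⁻¹' {j})]
      exact (sum_toReal_measure_preimage_singleton_inter P hV _).le
  have hcol : ∀ j', ∑ j, (P (U ⁻¹' {j} ∩ V ⁻¹' {j'})).toReal ≤ (P (V ⁻¹' {j'})).toReal :=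
    fun j' => (sum_toReal_measure_preimage_singleton_inter P hU _).le
  have hbound : ∀ x, ∑ j, (Q *ᵥ x) j ^ 2 ≤ ∑ j', x j' ^ 2 :=
    sum_mulVec_sq_le_sum_sq_of_sum_le (r := fun j j' => (P (U ⁻¹' {j} ∩ V ⁻¹' {j'})).toReal)
      (fun _ _ => ENNReal.toReal_nonneg) hrow hcol hQdef
  refine ⟨fun x => Real.sqrt_le_sqrt (hbound x), fun i => Real.sqrt_le_one.2 ?_⟩
  exact hherm.eigenvalues_le_of_sum_mulVec_sq_le (fun x => by simpa using hbound x) i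

/-- for random variables `U, V` with values in finite types and strictly
positive marginal probabilities, the Witsenhausen matrix
`Q(j,j') = P(U = j, V = j') / (√P(U = j) · √P(V = j'))` has operator norm (w.r.t. the
Euclidean norms) at most `1`: `‖Q x‖₂ ≤ ‖x‖₂` for every vector `x`. Hence every singular
value of `Q` (square root of an eigenvalue of `Qᵀ * Q`) is at most `1`. -/
theorem witsenhausen_operator_norm_le_one {Ω α β : Type*} [MeasurableSpace Ω]
    [Fintype α] [Fintype β] [DecidableEq α] [DecidableEq β]
    [MeasurableSpace α] [MeasurableSingletonClass α]
    [MeasurableSpace β] [MeasurableSingletonClass β]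
    (P : Measure Ω) [IsProbabilityMeasure P]
    (U : Ω → α) (V : Ω → β) (hU : Measurable U) (hV : Measurable V)
    (hposU : ∀ j : α, 0 < P (U ⁻¹' {j})) (hposV : ∀ j' : β, 0 < P (V ⁻¹' {j'}))
    (Q : Matrix α β ℝ)
    (hQdef : ∀ (j : α) (j' : β), Q j j' =
      (P (U ⁻¹' {j} ∩ V ⁻¹' {j'})).toReal /
        (Real.sqrt (P (U ⁻¹' {j})).toReal * Real.sqrt (P (V ⁻¹' {j'})).toReal))
    (hherm : (Qᵀ * Q).IsHermitian) :
    (∀ x : β → ℝ, Real.sqrt (∑ j : α, (Q.mulVec x j) ^ 2) ≤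
      Real.sqrt (∑ j' : β, (x j') ^ 2)) ∧
    ∀ i : β, Real.sqrt (hherm.eigenvalues i) ≤ 1 :=
  witsenhausen_operator_norm_le_one_general P U V hU hV Q hQdef hherm
end
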